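/- arXiv:2411.13964 — 2 statements merged into one kernel-verified Lean document; each statement's English description precedes it below -/
import Mathlib

section
/- Let σ¹,σ² be two independent instantaneous-tumble (resp. finite-tumble) velocity processes and N₁^L,N₂^L two independent rate-γ_L Poisson clocks independent of σ¹,σ². Let y^L and ỹ^L be two discrete processes with L sites, both driven by the same velocities σ¹,σ² and the same clocks N₁^L,N₂^L, but with possibly different initial states in {1,…,L}. Denote 0=Θ^{L,i}_0<Θ^{L,i}_1<⋯ the jump times of N_i^L and S^L(t) = Σ_{i=1,2} Σ_{k≥1} 1{Θ^{L,i}_k ≤ t}·(−1)^i·σ^i(Θ^{L,i}_k). Then, for any fixed realization and any T>0: |S^L(T)| ≥ L−1 implies inf{ t ≥ 0 : y^L(t) = ỹ^L(t) } ≤ T. -/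
open Filter

/-- Velocity values of the instantaneous-tumble process. -/
def V2 : Finset ℤ := {-1, 1}

/-- Velocity values of the finite-tumble process. -/
def V3 : Finset ℤ := {-1, 0, 1}

/-- Generator of the instantaneous-tumble velocity process (rate `w` flips) on `V2`. -/
noncomputable def genITP (w : ℝ) : ℤ → ℤ → ℝ := fun a b => if a = b then -w else w

/-- Generator of the finite-tumble velocity process on `V3`:
`1 → 0` and `-1 → 0` at rate `α`, `0 → 1` and `0 → -1` at rate `β/2`. -/
noncomputable def genFTP (a b : ℝ) : ℤ → ℤ → ℝ := fun c d =>
  if c = d then (if c = 0 then -b else -a)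
  else if c = 0 then b / 2
  else if d = 0 then a
  else 0

/-- Generator of a pair of independent Markov jump processes, each with generator `Q`. -/
noncomputable def pairGen {A : Type*} [DecidableEq A] (Q : A → A → ℝ) : A × A → A × A → ℝ :=
  fun z z' => (if z.2 = z'.2 then Q z.1 z'.1 else 0) + (if z.1 = z'.1 then Q z.2 z'.2 else 0)

/-- `p` is the transition function of the Markov jump process with generator `Q` on the finite
state space `S` : it solves Kolmogorov's forward equation with the identity as initial
condition.  (Equivalently, `p t = exp (t Q)` on `S`.) -/
def IsTransitionOf {A : Type*} [DecidableEq A] (S : Finset A) (Q : A → A → ℝ)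
    (p : ℝ → A → A → ℝ) : Prop :=
  (∀ a b, p 0 a b = if a = b then 1 else 0) ∧
  (∀ t a b, HasDerivAt (fun u => p u a b) (∑ c ∈ S, p t a c * Q c b) t)

/-- The process `Z` starting at `z₀` takes values in `S` and has the finite-dimensional
distributions of the Markov jump process with transition function `p`. -/
def HasLawMJP {Ω : Type*} [MeasurableSpace Ω] {A : Type*} [MeasurableSpace A]
    (P : MeasureTheory.Measure Ω) (S : Finset A) (p : ℝ → A → A → ℝ)
    (Z : ℝ → Ω → A) (z₀ : A) : Prop :=
  (∀ t, Measurable (Z t)) ∧ (∀ ω, Z 0 ω = z₀) ∧ (∀ t ω, Z t ω ∈ S) ∧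
  ∀ (n : ℕ) (t : ℕ → ℝ) (s : ℕ → A), (∀ i, 0 ≤ t i) → (∀ i, i < n → t i < t (i + 1)) →
    (P {ω | ∀ i ≤ n, Z (t i) ω = s i}).toReal =
      p (t 0) z₀ (s 0) * ∏ i ∈ Finset.range n, p (t (i + 1) - t i) (s i) (s (i + 1))

/-- `f` is a right-continuous step function on every bounded interval. -/
def PiecewiseConst {A : Type*} (f : ℝ → A) : Prop :=
  ∀ T : ℝ, 0 < T → ∃ (n : ℕ) (u : ℕ → ℝ), u 0 = 0 ∧ u n = T ∧ (∀ i, i < n → u i < u (i + 1)) ∧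
    ∀ i, i < n → ∀ s ∈ Set.Ico (u i) (u (i + 1)), f s = f (u i)

/-- Clipping to the interval `[0, ℓ]`. -/
noncomputable def clip (ℓ x : ℝ) : ℝ := max 0 (min ℓ x)

/-- Pathwise description of the inter-particle distance of the continuous process: on every
interval on which the velocities are constant, `x` follows the clipped linear motion with
velocity `σ² - σ¹`. -/
def IsClippedFlow (ℓ : ℝ) (σ : ℝ → ℤ × ℤ) (x₀ : ℝ) (x : ℝ → ℝ) : Prop :=
  x 0 = x₀ ∧
  ∀ s t : ℝ, 0 ≤ s → s ≤ t → (∀ u ∈ Set.Ico s t, σ u = σ s) →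
    x t = clip ℓ (x s + (((σ s).2 : ℝ) - ((σ s).1 : ℝ)) * (t - s))

/-- A continuous run-and-tumble model (the CITP for `S = V2`, `Q = genITP ω`; the CFTP for
`S = V3`, `Q = genFTP α β`) : for every initial condition, the velocity pair `Z` and the
inter-particle distance `x` are realized on a common probability space, together with the
associated Markov transition kernels `K t`. -/
structure RTPSystem (S : Finset ℤ) (Q : ℤ → ℤ → ℝ) (ℓ : ℝ) where
  Ω : Type
  [mΩ : MeasurableSpace Ω]
  P : MeasureTheory.Measure Ω
  prob : MeasureTheory.IsProbabilityMeasure P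
  p : ℝ → ℤ × ℤ → ℤ × ℤ → ℝ
  htrans : IsTransitionOf (S ×ˢ S) (pairGen Q) p
  x : ℝ × (ℤ × ℤ) → ℝ → Ω → ℝ
  Z : ℝ × (ℤ × ℤ) → ℝ → Ω → ℤ × ℤ
  hZ : ∀ z : ℝ × (ℤ × ℤ), z.1 ∈ Set.Icc 0 ℓ → z.2 ∈ S ×ˢ S →
    HasLawMJP P (S ×ˢ S) p (Z z) z.2 ∧ ∀ ω, PiecewiseConst fun t => Z z t ω
  hx : ∀ z : ℝ × (ℤ × ℤ), z.1 ∈ Set.Icc 0 ℓ → z.2 ∈ S ×ˢ S →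
    (∀ t, Measurable (x z t)) ∧ ∀ ω, IsClippedFlow ℓ (fun t => Z z t ω) z.1 fun t => x z t ω
  K : ℝ → ProbabilityTheory.Kernel (ℝ × ℤ × ℤ) (ℝ × ℤ × ℤ)
  hK : ∀ t, ProbabilityTheory.IsMarkovKernel (K t)
  hKlaw : ∀ t, 0 ≤ t → ∀ z : ℝ × (ℤ × ℤ), z.1 ∈ Set.Icc 0 ℓ → z.2 ∈ S ×ˢ S →
    K t z = P.map fun ω => (x z t ω, Z z t ω)

attribute [instance] RTPSystem.mΩ

/-- The physical state space `[0, ℓ] × (S × S)`. -/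
def validSet (S : Finset ℤ) (ℓ : ℝ) : Set (ℝ × ℤ × ℤ) :=
  (Set.Icc 0 ℓ) ×ˢ {q : ℤ × ℤ | q.1 ∈ S ∧ q.2 ∈ S}

/-- Total variation distance between two measures. -/
noncomputable def tvDist {A : Type*} [MeasurableSpace A] (μ ν : MeasureTheory.Measure A) : ℝ :=
  ⨆ B : {B : Set A // MeasurableSet B}, |(μ B.1).toReal - (ν B.1).toReal|

/-- `π` is an invariant probability measure of the system. -/
def IsInvariantMeasure {S : Finset ℤ} {Q : ℤ → ℤ → ℝ} {ℓ : ℝ} (sys : RTPSystem S Q ℓ)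
    (π : MeasureTheory.Measure (ℝ × ℤ × ℤ)) : Prop :=
  MeasureTheory.IsProbabilityMeasure π ∧ π (validSet S ℓ) = 1 ∧
    ∀ t, 0 ≤ t → π.bind (fun z => sys.K t z) = π

/-- The mixing time `t_mix(ε) = inf {t ≥ 0 : sup_μ ‖μ P_t - π‖_TV ≤ ε}` of the system. -/
noncomputable def mixTime {S : Finset ℤ} {Q : ℤ → ℤ → ℝ} {ℓ : ℝ} (sys : RTPSystem S Q ℓ)
    (π : MeasureTheory.Measure (ℝ × ℤ × ℤ)) (ε : ℝ) : ℝ :=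
  sInf {t : ℝ | 0 ≤ t ∧ ∀ μ : MeasureTheory.Measure (ℝ × ℤ × ℤ),
    MeasureTheory.IsProbabilityMeasure μ → μ (validSet S ℓ) = 1 →
      tvDist (μ.bind fun z => sys.K t z) π ≤ ε}

/-- Index type used to express joint independence of the two Poisson clocks and the velocity
process: `none` labels the velocity path, `some (i, k)` labels the `k`-th inter-ring waiting
time of clock `i`. -/
def clockIdxType : Option (Fin 2 × ℕ) → Type := fun j => match j with
  | none => ℝ → ℤ × ℤ
  | some _ => ℝ

instance (j : Option (Fin 2 × ℕ)) : MeasurableSpace (clockIdxType j) :=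
  match j with
  | none => inferInstanceAs (MeasurableSpace (ℝ → ℤ × ℤ))
  | some _ => inferInstanceAs (MeasurableSpace ℝ)

/-- The family consisting of the velocity path and all waiting times of the two clocks. -/
def clockFam {Ω : Type*} (Θ : Fin 2 → ℕ → Ω → ℝ) (W : Ω → ℝ → ℤ × ℤ) :
    (j : Option (Fin 2 × ℕ)) → Ω → clockIdxType j := fun j => match j with
  | none => W
  | some ik => fun ω => Θ ik.1 (ik.2 + 1) ω - Θ ik.1 ik.2 ω

/-- `Θ 0` and `Θ 1` are the jump times of two independent rate-`γ` Poisson processes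
(partial sums of i.i.d. exponential waiting times), independent of the process with paths
`W`. -/
def IsPoissonClocksIndepOf {Ω : Type*} [MeasurableSpace Ω] (P : MeasureTheory.Measure Ω)
    (γ : ℝ) (Θ : Fin 2 → ℕ → Ω → ℝ) (W : Ω → ℝ → ℤ × ℤ) : Prop :=
  (∀ i ω, Θ i 0 ω = 0) ∧ (∀ i k, Measurable (Θ i k)) ∧
  (∀ ω i, StrictMono fun k => Θ i k ω) ∧
  (∀ ω i, Tendsto (fun k => Θ i k ω) atTop atTop) ∧
  ProbabilityTheory.iIndepFun (clockFam Θ W) P ∧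
  ∀ i k, P.map (fun ω => Θ i (k + 1) ω - Θ i k ω) = ProbabilityTheory.expMeasure γ

/-- The compensated-jump sum `S^L(t) = Σ_{i=1,2} Σ_{k≥1} 1_{Θ^i_k ≤ t} (-1)^i σ^i(Θ^i_k)`
(clock `Θ 0` carries `-σ¹`, clock `Θ 1` carries `+σ²`). -/
noncomputable def clockSum (Θ : Fin 2 → ℕ → ℝ) (σ : ℝ → ℤ × ℤ) (t : ℝ) : ℝ :=
  (∑' k : ℕ, if Θ 1 (k + 1) ≤ t then ((σ (Θ 1 (k + 1))).2 : ℝ) else 0) -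
  (∑' k : ℕ, if Θ 0 (k + 1) ≤ t then ((σ (Θ 0 (k + 1))).1 : ℝ) else 0)

/-- Pathwise description of the discrete process on `{1, …, L}` driven by the velocity path
`σ` and the ring times `Θ₁, Θ₂`: `y` is constant between rings and, at a ring of clock 1
(resp. clock 2), jumps to `max(1, min(L, y - σ¹))` (resp. `max(1, min(L, y + σ²))`),
evaluated at the left limit. -/
def IsDiscreteRTP (L : ℕ) (Θ₁ Θ₂ : ℕ → ℝ) (σ : ℝ → ℤ × ℤ) (y : ℝ → ℤ) : Prop :=
  (∀ s t : ℝ, 0 ≤ s → s ≤ t →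
    (∀ k, 1 ≤ k → Θ₁ k ∉ Set.Ioc s t ∧ Θ₂ k ∉ Set.Ioc s t) → y t = y s) ∧
  (∀ k, 1 ≤ k → ∀ s, 0 ≤ s → s < Θ₁ k →
    (∀ j, 1 ≤ j → Θ₁ j ∉ Set.Ioo s (Θ₁ k) ∧ Θ₂ j ∉ Set.Ioc s (Θ₁ k)) →
    (∀ u ∈ Set.Ico s (Θ₁ k), σ u = σ s) →
    y (Θ₁ k) = max 1 (min (L : ℤ) (y s - (σ s).1))) ∧
  (∀ k, 1 ≤ k → ∀ s, 0 ≤ s → s < Θ₂ k →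
    (∀ j, 1 ≤ j → Θ₂ j ∉ Set.Ioo s (Θ₂ k) ∧ Θ₁ j ∉ Set.Ioc s (Θ₂ k)) →
    (∀ u ∈ Set.Ico s (Θ₂ k), σ u = σ s) →
    y (Θ₂ k) = max 1 (min (L : ℤ) (y s + (σ s).2)))

/-!
At every ring the discrete process `z` and the sum `S` move by the same increment `c`, except that
`z` is clipped by `x ↦ max 1 (min L x)`. Hence `z t ≤ L`, and as long as `z` has not visited `L`
it has risen by at least `S t`. Clipping is monotone and commutes with the reflection
`x ↦ L + 1 - x`, so the pointwise minimum of `y` and `y'` is again a discrete process, and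
reflecting the sites and the velocities turns `S` into `-S`. If `S T ≥ L - 1`, the minimum of
`y, y'` reaches `L` by time `T`, and at that time `y = y' = L`; the case `S T ≤ 1 - L` is its
reflection.
-/

open Set

/-- For ring times `0 = θ 0 < θ 1 < ⋯` (the time `θ 0` is not a ring), exactly `k` rings lie
in `(0, t]`. -/
def IsRingCount (θ : ℕ → ℝ) (t : ℝ) (k : ℕ) : Prop :=
  θ k ≤ t ∧ t < θ (k + 1)

/-- Pathwise properties of the clocks `Θ` and the velocities `σ` that hold almost surely in the
paper's setting. -/
structure IsAdmissibleDrive (Θ : Fin 2 → ℕ → ℝ) (σ : ℝ → ℤ × ℤ) : Prop where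
  zero : ∀ i, Θ i 0 = 0
  strictMono : ∀ i, StrictMono (Θ i)
  tendsto : ∀ i, Tendsto (Θ i) atTop atTop
  ne : ∀ j k : ℕ, 1 ≤ j → 1 ≤ k → Θ 0 j ≠ Θ 1 k
  leftConst : ∀ (i : Fin 2) (k : ℕ), 1 ≤ k →
    ∃ δ : ℝ, 0 < δ ∧ ∀ u ∈ Ioc (Θ i k - δ) (Θ i k), σ u = σ (Θ i k)

def ringSum (Θ : Fin 2 → ℕ → ℝ) (σ : ℝ → ℤ × ℤ) (k₀ k₁ : ℕ) : ℤ :=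
  ∑ k ∈ Finset.range k₁, (σ (Θ 1 (k + 1))).2 - ∑ k ∈ Finset.range k₀, (σ (Θ 0 (k + 1))).1

theorem exists_isRingCount {θ : ℕ → ℝ} (h0 : θ 0 = 0) (htop : Tendsto θ atTop atTop) {t : ℝ}
    (ht : 0 ≤ t) : ∃ k, IsRingCount θ t k := by
  classical
  have hex : ∃ K, t < θ K := (htop.eventually_gt_atTop t).exists
  have hpos : 0 < Nat.find hex := Nat.pos_of_ne_zero fun h => by
    have := Nat.find_spec hex
    rw [h, h0] at this
    linarith
  refine ⟨Nat.find hex - 1, not_lt.mp (Nat.find_min hex (by omega)), ?_⟩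
  rw [Nat.sub_add_cancel hpos]
  exact Nat.find_spec hex

namespace IsRingCount

variable {θ : ℕ → ℝ} {s t : ℝ} {k : ℕ}

theorem notMem_Ioc (hθ : Monotone θ) (hs : IsRingCount θ s k) (ht : IsRingCount θ t k) (j : ℕ) :
    θ j ∉ Ioc s t := by
  rintro ⟨hsj, hjt⟩
  have hjk : j ≤ k := Nat.lt_succ_iff.mp (hθ.reflect_lt (hjt.trans_lt ht.2))
  exact ((hθ hjk).trans hs.1).not_gt hsj

theorem tsum_ite_eq_sum_range (hθ : Monotone θ) (h : IsRingCount θ t k) (f : ℕ → ℝ) :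
    ∑' j, (if θ (j + 1) ≤ t then f j else 0) = ∑ j ∈ Finset.range k, f j := by
  rw [tsum_eq_sum (s := Finset.range k) fun j hj => if_neg fun hle => ?_]
  · refine Finset.sum_congr rfl fun j hj => if_pos ((hθ ?_).trans h.1)
    exact Finset.mem_range.mp hj
  · have : k + 1 ≤ j + 1 := by simpa using hj
    exact (hθ this).not_gt (hle.trans_lt h.2) |>.elim

end IsRingCount

theorem clockSum_eq_ringSum {Θ : Fin 2 → ℕ → ℝ} (hΘ : ∀ i, Monotone (Θ i)) (σ : ℝ → ℤ × ℤ)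
    {t : ℝ} {k₀ k₁ : ℕ} (h₀ : IsRingCount (Θ 0) t k₀) (h₁ : IsRingCount (Θ 1) t k₁) :
    clockSum Θ σ t = ringSum Θ σ k₀ k₁ := by
  rw [clockSum, h₀.tsum_ite_eq_sum_range (hΘ 0) (fun j => ((σ (Θ 0 (j + 1))).1 : ℝ)),
    h₁.tsum_ite_eq_sum_range (hΘ 1) (fun j => ((σ (Θ 1 (j + 1))).2 : ℝ))]
  push_cast [ringSum]
  rfl

theorem clockSum_neg (Θ : Fin 2 → ℕ → ℝ) (σ : ℝ → ℤ × ℤ) (t : ℝ) :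
    clockSum Θ (-σ) t = -clockSum Θ σ t := by
  have hneg (p : Prop) [Decidable p] (a : ℝ) : (if p then -a else 0) = -(if p then a else 0) := by
    rw [apply_ite Neg.neg, neg_zero]
  simp only [clockSum, Pi.neg_apply, Prod.fst_neg, Prod.snd_neg, Int.cast_neg, hneg, tsum_neg]
  ring

namespace IsDiscreteRTP

variable {L : ℕ} {θ₁ θ₂ : ℕ → ℝ} {σ : ℝ → ℤ × ℤ} {y y' z : ℝ → ℤ}

protected theorem min (hy : IsDiscreteRTP L θ₁ θ₂ σ y) (hy' : IsDiscreteRTP L θ₁ θ₂ σ y') :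
    IsDiscreteRTP L θ₁ θ₂ σ fun t => min (y t) (y' t) := by
  refine ⟨fun s t hs hst h => ?_, fun k hk s hs hlt h hc => ?_, fun k hk s hs hlt h hc => ?_⟩
  all_goals dsimp only
  · rw [hy.1 s t hs hst h, hy'.1 s t hs hst h]
  · rw [hy.2.1 k hk s hs hlt h hc, hy'.2.1 k hk s hs hlt h hc]
    omega
  · rw [hy.2.2 k hk s hs hlt h hc, hy'.2.2 k hk s hs hlt h hc]
    omega

theorem reflect (hL : 1 ≤ L) (hz : IsDiscreteRTP L θ₁ θ₂ σ z) :
    IsDiscreteRTP L θ₁ θ₂ (-σ) fun t => L + 1 - z t := by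
  have hσ {s r : ℝ} (h : ∀ u ∈ Ico s r, (-σ) u = (-σ) s) : ∀ u ∈ Ico s r, σ u = σ s :=
    fun u hu => neg_inj.mp (h u hu)
  refine ⟨fun s t hs hst h => ?_, fun k hk s hs hlt h hc => ?_, fun k hk s hs hlt h hc => ?_⟩
  all_goals dsimp only
  · rw [hz.1 s t hs hst h]
  · rw [hz.2.1 k hk s hs hlt h (hσ hc), Pi.neg_apply, Prod.fst_neg]
    omega
  · rw [hz.2.2 k hk s hs hlt h (hσ hc), Pi.neg_apply, Prod.snd_neg]
    omega

theorem swap (hz : IsDiscreteRTP L θ₁ θ₂ σ z) :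
    IsDiscreteRTP L θ₂ θ₁ (fun t => -(σ t).swap) z := by
  have hσ {s r : ℝ} (h : ∀ u ∈ Ico s r, -(σ u).swap = -(σ s).swap) : ∀ u ∈ Ico s r, σ u = σ s :=
    fun u hu => Prod.swap_injective (neg_inj.mp (h u hu))
  refine ⟨fun s t hs hst h => hz.1 s t hs hst fun k hk => (h k hk).symm,
    fun k hk s hs hlt h hc => ?_, fun k hk s hs hlt h hc => ?_⟩
  · simp only [hz.2.2 k hk s hs hlt h (hσ hc), Prod.fst_neg, Prod.fst_swap, sub_neg_eq_add]
  · simp only [hz.2.1 k hk s hs hlt h (hσ hc), Prod.snd_neg, Prod.snd_swap, sub_eq_add_neg]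

theorem eq_of_isRingCount (hz : IsDiscreteRTP L θ₁ θ₂ σ z) (hθ₁ : Monotone θ₁)
    (hθ₂ : Monotone θ₂) {s t : ℝ} {k m : ℕ} (hs0 : 0 ≤ s) (hst : s ≤ t)
    (h₁s : IsRingCount θ₁ s k) (h₁t : IsRingCount θ₁ t k)
    (h₂s : IsRingCount θ₂ s m) (h₂t : IsRingCount θ₂ t m) : z t = z s :=
  hz.1 s t hs0 hst fun j _ => ⟨h₁s.notMem_Ioc hθ₁ h₁t j, h₂s.notMem_Ioc hθ₂ h₂t j⟩

theorem exists_eq_clip_of_last_ring (hz : IsDiscreteRTP L θ₁ θ₂ σ z) (hθ₁ : StrictMono θ₁)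
    (hθ₂ : Monotone θ₂) (hθ₂0 : θ₂ 0 = 0) {t : ℝ} {k m : ℕ}
    (hσ : ∃ δ : ℝ, 0 < δ ∧ ∀ u ∈ Ioc (θ₁ (k + 1) - δ) (θ₁ (k + 1)), σ u = σ (θ₁ (k + 1)))
    (h₁ : IsRingCount θ₁ t (k + 1)) (h₂ : IsRingCount θ₂ t m) (hlast : θ₂ m < θ₁ (k + 1)) :
    ∃ s, IsRingCount θ₁ s k ∧ IsRingCount θ₂ s m ∧
      z t = max 1 (min (L : ℤ) (z s - (σ (θ₁ (k + 1))).1)) := by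
  obtain ⟨δ, hδ, hσδ⟩ := hσ
  set r := θ₁ (k + 1)
  -- a time before `r` but after every earlier ring, in the window where `σ` is constant
  set s := max (max (θ₁ k) (θ₂ m)) (r - δ / 2)
  have hsr : s < r := max_lt (max_lt (hθ₁ k.lt_succ_self) hlast) (by linarith)
  have hs₁ : IsRingCount θ₁ s k := ⟨(le_max_left _ _).trans (le_max_left _ _), hsr⟩
  have hs₂ : IsRingCount θ₂ s m :=
    ⟨(le_max_right _ _).trans (le_max_left _ _), (hsr.trans_le h₁.1).trans h₂.2⟩
  have hr₂ : IsRingCount θ₂ r m := ⟨hs₂.1.trans hsr.le, h₁.1.trans_lt h₂.2⟩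
  have hs0 : 0 ≤ s := (hθ₂0 ▸ hθ₂ m.zero_le).trans hs₂.1
  have hσs : ∀ u ∈ Icc s r, σ u = σ r := fun u hu =>
    hσδ u ⟨by linarith [le_max_right (max (θ₁ k) (θ₂ m)) (r - δ / 2), hu.1], hu.2⟩
  have hno₁ (j : ℕ) : θ₁ j ∉ Ioo s r := fun hj => by
    have := hθ₁.lt_iff_lt.mp (hs₁.1.trans_lt hj.1)
    have := hθ₁.lt_iff_lt.mp hj.2
    omega
  have hjump : z r = max 1 (min (L : ℤ) (z s - (σ s).1)) :=
    hz.2.1 (k + 1) k.succ_pos s hs0 hsr (fun j _ => ⟨hno₁ j, hs₂.notMem_Ioc hθ₂ hr₂ j⟩)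
      fun u hu => (hσs u ⟨hu.1, hu.2.le⟩).trans (hσs s ⟨le_rfl, hsr.le⟩).symm
  refine ⟨s, hs₁, hs₂, ?_⟩
  rw [hz.eq_of_isRingCount hθ₁.monotone hθ₂ (hs0.trans hsr.le) h₁.1 ⟨le_rfl, h₁.1.trans_lt h₁.2⟩
    h₁ hr₂ h₂, hjump, hσs s ⟨le_rfl, hsr.le⟩]

end IsDiscreteRTP

section Drive

variable {L : ℕ} {Θ : Fin 2 → ℕ → ℝ} {σ : ℝ → ℤ × ℤ} {y y' z : ℝ → ℤ}

theorem IsAdmissibleDrive.neg (hd : IsAdmissibleDrive Θ σ) : IsAdmissibleDrive Θ (-σ) :=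
  ⟨hd.zero, hd.strictMono, hd.tendsto, hd.ne, fun i k hk =>
    (hd.leftConst i k hk).imp fun _ h => ⟨h.1, fun u hu => by rw [Pi.neg_apply, h.2 u hu]; rfl⟩⟩

theorem IsAdmissibleDrive.exists_last_ring (hd : IsAdmissibleDrive Θ σ) {k₀ k₁ : ℕ}
    (h : k₀ + k₁ ≠ 0) :
    (∃ a, k₀ = a + 1 ∧ Θ 1 k₁ < Θ 0 (a + 1)) ∨ (∃ b, k₁ = b + 1 ∧ Θ 0 k₀ < Θ 1 (b + 1)) := by
  have hpos (i : Fin 2) (k : ℕ) : 0 < Θ i (k + 1) := hd.zero i ▸ hd.strictMono i k.succ_pos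
  rcases k₀ with _ | a <;> rcases k₁ with _ | b
  · exact absurd rfl h
  · exact Or.inr ⟨b, rfl, hd.zero 0 ▸ hpos 1 b⟩
  · exact Or.inl ⟨a, rfl, hd.zero 1 ▸ hpos 0 a⟩
  · rcases (hd.ne (a + 1) (b + 1) (by omega) (by omega)).lt_or_gt with hlt | hlt
    · exact Or.inr ⟨b, rfl, hlt⟩
    · exact Or.inl ⟨a, rfl, hlt⟩

theorem le_and_exists_eq_or_le_of_eq_clip (hL : 1 ≤ L) {s t : ℝ} {a c : ℤ} (hst : s ≤ t)
    (ht0 : 0 ≤ t) (hs : (∃ τ ∈ Icc 0 s, z τ = L) ∨ z 0 + a ≤ z s)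
    (ht : z t = max 1 (min (L : ℤ) (z s + c))) :
    z t ≤ L ∧ ((∃ τ ∈ Icc 0 t, z τ = L) ∨ z 0 + (a + c) ≤ z t) := by
  refine ⟨by omega, ?_⟩
  rcases hs with ⟨τ, hτ, hτL⟩ | hrise
  · exact Or.inl ⟨τ, ⟨hτ.1, hτ.2.trans hst⟩, hτL⟩
  · by_cases hc : (L : ℤ) ≤ z s + c
    · exact Or.inl ⟨t, ⟨ht0, le_rfl⟩, by omega⟩
    · exact Or.inr (by omega)

namespace IsDiscreteRTP

theorem le_and_exists_eq_or_add_ringSum_le (hd : IsAdmissibleDrive Θ σ)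
    (hz : IsDiscreteRTP L (Θ 0) (Θ 1) σ z) (hz0 : z 0 ∈ Icc 1 (L : ℤ)) (n : ℕ) :
    ∀ {k₀ k₁ : ℕ} {t : ℝ}, k₀ + k₁ = n → IsRingCount (Θ 0) t k₀ → IsRingCount (Θ 1) t k₁ →
      z t ≤ L ∧ ((∃ τ ∈ Icc 0 t, z τ = L) ∨ z 0 + ringSum Θ σ k₀ k₁ ≤ z t) := by
  have hL : 1 ≤ L := by exact_mod_cast hz0.1.trans hz0.2
  have hmono (i : Fin 2) : Monotone (Θ i) := (hd.strictMono i).monotone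
  have ht0 {t : ℝ} {k : ℕ} (h : IsRingCount (Θ 0) t k) : 0 ≤ t :=
    (hd.zero 0 ▸ hmono 0 k.zero_le).trans h.1
  induction n with
  | zero =>
    intro k₀ k₁ t hn h₀ h₁
    obtain ⟨rfl, rfl⟩ : k₀ = 0 ∧ k₁ = 0 := by omega
    have hstart (i : Fin 2) : IsRingCount (Θ i) 0 0 :=
      ⟨(hd.zero i).le, hd.zero i ▸ hd.strictMono i zero_lt_one⟩
    rw [hz.eq_of_isRingCount (hmono 0) (hmono 1) le_rfl (ht0 h₀) (hstart 0) h₀ (hstart 1) h₁]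
    exact ⟨hz0.2, Or.inr (by simp [ringSum])⟩
  | succ n ih =>
    intro k₀ k₁ t hn h₀ h₁
    rcases hd.exists_last_ring (by omega : k₀ + k₁ ≠ 0) with ⟨a, rfl, hlast⟩ | ⟨b, rfl, hlast⟩
    · obtain ⟨s, hs₀, hs₁, hzt⟩ := hz.exists_eq_clip_of_last_ring (hd.strictMono 0) (hmono 1)
        (hd.zero 1) (hd.leftConst 0 (a + 1) (by omega)) h₀ h₁ hlast
      have hsum : ringSum Θ σ (a + 1) k₁ = ringSum Θ σ a k₁ + -(σ (Θ 0 (a + 1))).1 := by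
        simp only [ringSum, Finset.sum_range_succ]
        ring
      rw [hsum]
      exact le_and_exists_eq_or_le_of_eq_clip hL (hs₀.2.le.trans h₀.1) (ht0 h₀)
        (ih (by omega) hs₀ hs₁).2 (by rw [hzt, sub_eq_add_neg])
    · have hσ : ∃ δ : ℝ, 0 < δ ∧ ∀ u ∈ Ioc (Θ 1 (b + 1) - δ) (Θ 1 (b + 1)),
          -(σ u).swap = -(σ (Θ 1 (b + 1))).swap :=
        (hd.leftConst 1 (b + 1) (by omega)).imp fun _ h => ⟨h.1, fun u hu => by rw [h.2 u hu]⟩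
      obtain ⟨s, hs₁, hs₀, hzt⟩ := hz.swap.exists_eq_clip_of_last_ring (hd.strictMono 1)
        (hmono 0) (hd.zero 0) hσ h₁ h₀ hlast
      have hsum : ringSum Θ σ k₀ (b + 1) = ringSum Θ σ k₀ b + (σ (Θ 1 (b + 1))).2 := by
        simp only [ringSum, Finset.sum_range_succ]
        ring
      rw [hsum]
      exact le_and_exists_eq_or_le_of_eq_clip hL (hs₁.2.le.trans h₁.1) (ht0 h₀)
        (ih (by omega) hs₀ hs₁).2 (by rw [hzt, Prod.fst_neg, Prod.fst_swap, sub_neg_eq_add])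

theorem le_and_exists_eq_or_add_clockSum_le (hd : IsAdmissibleDrive Θ σ)
    (hz : IsDiscreteRTP L (Θ 0) (Θ 1) σ z) (hz0 : z 0 ∈ Icc 1 (L : ℤ)) {t : ℝ} (ht : 0 ≤ t) :
    z t ≤ L ∧ ((∃ τ ∈ Icc 0 t, z τ = L) ∨ (z 0 : ℝ) + clockSum Θ σ t ≤ z t) := by
  obtain ⟨k₀, h₀⟩ := exists_isRingCount (hd.zero 0) (hd.tendsto 0) ht
  obtain ⟨k₁, h₁⟩ := exists_isRingCount (hd.zero 1) (hd.tendsto 1) ht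
  rw [clockSum_eq_ringSum (fun i => (hd.strictMono i).monotone) σ h₀ h₁]
  exact_mod_cast hz.le_and_exists_eq_or_add_ringSum_le hd hz0 _ rfl h₀ h₁

end IsDiscreteRTP

theorem exists_eq_of_le_clockSum (hd : IsAdmissibleDrive Θ σ)
    (hy : IsDiscreteRTP L (Θ 0) (Θ 1) σ y) (hy' : IsDiscreteRTP L (Θ 0) (Θ 1) σ y')
    (hy0 : y 0 ∈ Icc 1 (L : ℤ)) (hy'0 : y' 0 ∈ Icc 1 (L : ℤ)) {T : ℝ} (hT : 0 ≤ T)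
    (hS : (L : ℝ) - 1 ≤ clockSum Θ σ T) : ∃ τ ∈ Icc 0 T, y τ = y' τ := by
  have hm0 : min (y 0) (y' 0) ∈ Icc 1 (L : ℤ) := ⟨le_min hy0.1 hy'0.1, min_le_of_left_le hy0.2⟩
  obtain ⟨τ, hτ, hmτ⟩ : ∃ τ ∈ Icc 0 T, min (y τ) (y' τ) = L := by
    obtain ⟨hle, hit | hrise⟩ := (hy.min hy').le_and_exists_eq_or_add_clockSum_le hd hm0 hT
    · exact hit
    · have h1 : (1 : ℝ) ≤ min (y 0) (y' 0) := by exact_mod_cast hm0.1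
      have hge : (L : ℝ) ≤ min (y T) (y' T) := by push_cast at h1 hrise ⊢; linarith
      exact ⟨T, ⟨hT, le_rfl⟩, le_antisymm hle (by exact_mod_cast hge)⟩
  have hyτ := (hy.le_and_exists_eq_or_add_clockSum_le hd hy0 hτ.1).1
  have hy'τ := (hy'.le_and_exists_eq_or_add_clockSum_le hd hy'0 hτ.1).1
  exact ⟨τ, hτ, by omega⟩

end Drive

theorem discrete_coupling_deterministic_lemma_general
    (L : ℕ) (T : ℝ) (hT : 0 < T)
    (Θ : Fin 2 → ℕ → ℝ)
    (hΘ0 : ∀ i, Θ i 0 = 0) (hΘmono : ∀ i, StrictMono (Θ i))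
    (hΘtop : ∀ i, Filter.Tendsto (Θ i) Filter.atTop Filter.atTop)
    (hΘdistinct : ∀ j k : ℕ, 1 ≤ j → 1 ≤ k → Θ 0 j ≠ Θ 1 k)
    (σ : ℝ → ℤ × ℤ)
    (hσΘ : ∀ (i : Fin 2) (k : ℕ), 1 ≤ k →
      ∃ δ : ℝ, 0 < δ ∧ ∀ u ∈ Set.Ioc (Θ i k - δ) (Θ i k), σ u = σ (Θ i k))
    (y y' : ℝ → ℤ)
    (hy : IsDiscreteRTP L (Θ 0) (Θ 1) σ y) (hy' : IsDiscreteRTP L (Θ 0) (Θ 1) σ y')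
    (hy0 : y 0 ∈ Set.Icc 1 (L : ℤ)) (hy'0 : y' 0 ∈ Set.Icc 1 (L : ℤ))
    (hbig : (L : ℝ) - 1 ≤ |clockSum Θ σ T|) :
    sInf {t : ℝ | 0 ≤ t ∧ y t = y' t} ≤ T := by
  have hd : IsAdmissibleDrive Θ σ := ⟨hΘ0, hΘmono, hΘtop, hΘdistinct, hσΘ⟩
  have hL : 1 ≤ L := by exact_mod_cast hy0.1.trans hy0.2
  have hreflect {x : ℤ} (hx : x ∈ Icc 1 (L : ℤ)) : (L : ℤ) + 1 - x ∈ Icc 1 (L : ℤ) := by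
    simp only [mem_Icc] at hx ⊢
    omega
  obtain ⟨τ, hτ, hyτ⟩ : ∃ τ ∈ Icc 0 T, y τ = y' τ := by
    rcases le_abs.mp hbig with hS | hS
    · exact exists_eq_of_le_clockSum hd hy hy' hy0 hy'0 hT.le hS
    · obtain ⟨τ, hτ, h⟩ := exists_eq_of_le_clockSum hd.neg (hy.reflect hL) (hy'.reflect hL)
        (hreflect hy0) (hreflect hy'0) hT.le (by rwa [clockSum_neg])
      exact ⟨τ, hτ, by linarith⟩
  have hbdd : BddBelow {t : ℝ | 0 ≤ t ∧ y t = y' t} := ⟨0, fun _ ht => ht.1⟩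
  exact (csInf_le hbdd ⟨hτ.1, hyτ⟩).trans hτ.2

/-- **Deterministic coupling lemma for the discrete processes.** Fix a realization of the
velocity pair `σ` and of the ring times `Θ` of the two Poisson clocks, and let `y, y'` be two
discrete processes on `{1, …, L}` driven by the same velocities and the same clocks. If
`|S^L(T)| ≥ L - 1`, then `inf {t ≥ 0 : y(t) = y'(t)} ≤ T`. -/
theorem discrete_coupling_deterministic_lemma
    (S : Finset ℤ) (hS : S = V2 ∨ S = V3) (L : ℕ) (hL : 2 ≤ L) (T : ℝ) (hT : 0 < T)
    (Θ : Fin 2 → ℕ → ℝ)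
    (hΘ0 : ∀ i, Θ i 0 = 0) (hΘmono : ∀ i, StrictMono (Θ i))
    (hΘtop : ∀ i, Filter.Tendsto (Θ i) Filter.atTop Filter.atTop)
    (hΘdistinct : ∀ j k : ℕ, 1 ≤ j → 1 ≤ k → Θ 0 j ≠ Θ 1 k)
    (σ : ℝ → ℤ × ℤ) (hσpc : PiecewiseConst σ) (hσval : ∀ t, σ t ∈ S ×ˢ S)
    (hσΘ : ∀ (i : Fin 2) (k : ℕ), 1 ≤ k →
      ∃ δ : ℝ, 0 < δ ∧ ∀ u ∈ Set.Ioc (Θ i k - δ) (Θ i k), σ u = σ (Θ i k))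
    (y y' : ℝ → ℤ)
    (hy : IsDiscreteRTP L (Θ 0) (Θ 1) σ y) (hy' : IsDiscreteRTP L (Θ 0) (Θ 1) σ y')
    (hy0 : y 0 ∈ Set.Icc 1 (L : ℤ)) (hy'0 : y' 0 ∈ Set.Icc 1 (L : ℤ))
    (hbig : (L : ℝ) - 1 ≤ |clockSum Θ σ T|) :
    sInf {t : ℝ | 0 ≤ t ∧ y t = y' t} ≤ T :=
  discrete_coupling_deterministic_lemma_general L T hT Θ hΘ0 hΘmono hΘtop hΘdistinct σ hσΘ y y' hy
    hy' hy0 hy'0 hbig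
end

section
/- Let ω>0, ζ∈ℝ and t≥0. Consider the real 2×2 matrices 𝔔 = [[−ω, ω],[ω, −ω]] and V = [[−1, 0],[0, 1]]. Then the matrix exponential exp(t(𝔔+ζV)) applied to the vector (1,1)ᵀ equals the vector whose first component is e^{−tω}·( (ω−ζ)·sinh(t·√(ζ²+ω²))/√(ζ²+ω²) + cosh(t·√(ζ²+ω²)) ) and whose second component is e^{−tω}·( (ω+ζ)·sinh(t·√(ζ²+ω²))/√(ζ²+ω²) + cosh(t·√(ζ²+ω²)) ). -/
/-! The generator splits as `𝔔 + ζ V = -ω • 1 + B` with `B = [[-ζ, ω], [ω, ζ]]`, and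
`B * B = r² • 1` for `r = √(ζ² + ω²)`. Hence the even and odd parts of the exponential
series of `t B` are the `cosh` and `sinh` series at `t r`, so
`exp (t B) = cosh (t r) • 1 + (sinh (t r) / r) • B`. The scalar part contributes the factor
`e^{-tω}`, and `B (1, 1)ᵀ = (ω - ζ, ω + ζ)ᵀ`. -/

open NormedSpace

section MulSelfEqScalar

variable {A : Type*} [Ring A] [Algebra ℝ A] {b : A} {r : ℝ}

lemma pow_two_mul_of_mul_self_eq (hb : b * b = r ^ 2 • 1) (n : ℕ) :
    b ^ (2 * n) = r ^ (2 * n) • 1 := by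
  rw [pow_mul, sq, hb, smul_pow, one_pow, ← pow_mul]

lemma pow_two_mul_add_one_of_mul_self_eq (hb : b * b = r ^ 2 • 1) (n : ℕ) :
    b ^ (2 * n + 1) = r ^ (2 * n) • b := by
  rw [pow_succ, pow_two_mul_of_mul_self_eq hb, smul_mul_assoc, one_mul]

variable [TopologicalSpace A] [IsTopologicalRing A] [ContinuousSMul ℝ A] [T2Space A]

theorem exp_smul_of_mul_self_eq (hb : b * b = r ^ 2 • 1) (hr : r ≠ 0) (t : ℝ) :
    exp (t • b) = Real.cosh (t * r) • 1 + (Real.sinh (t * r) / r) • b := by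
  rw [exp_eq_tsum ℝ]
  refine HasSum.tsum_eq (HasSum.even_add_odd ?_ ?_)
  · convert (Real.hasSum_cosh (t * r)).smul_const (1 : A) using 2 with n
    rw [smul_pow, pow_two_mul_of_mul_self_eq hb, smul_smul, smul_smul, mul_pow]
    congr 1
    ring
  · convert ((Real.hasSum_sinh (t * r)).div_const r).smul_const b using 2 with n
    rw [smul_pow, pow_two_mul_add_one_of_mul_self_eq hb, smul_smul, smul_smul, mul_pow]
    congr 1
    field_simp
    ring

end MulSelfEqScalar

theorem Matrix.exp_smul_one {m : Type*} [Fintype m] [DecidableEq m] (c : ℝ) :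
    exp (c • (1 : Matrix m m ℝ)) = Real.exp c • 1 := by
  rw [Matrix.smul_one_eq_diagonal, Matrix.exp_diagonal, Pi.exp_def, ← Real.exp_eq_exp_ℝ,
    Matrix.smul_one_eq_diagonal]

section FinTwo

variable {α : Type*} [CommRing α]

lemma Matrix.fin_two_generator_add_smul_eq (w z : α) :
    !![-w, w; w, -w] + z • !![-1, 0; 0, 1] =
      (-w) • (1 : Matrix (Fin 2) (Fin 2) α) + !![-z, w; w, z] := by
  ext i j
  fin_cases i <;> fin_cases j <;>
    simp only [Matrix.add_apply, Matrix.smul_apply, Matrix.of_apply, Matrix.cons_val',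
      Matrix.cons_val_zero, Matrix.cons_val_one, Matrix.cons_val_fin_one, Matrix.one_apply_eq,
      Matrix.one_apply_ne, ne_eq, zero_ne_one, one_ne_zero, not_false_eq_true, Fin.zero_eta,
      Fin.mk_one, Fin.isValue, smul_eq_mul] <;> ring

lemma Matrix.fin_two_neg_diag_mul_self (a b : α) :
    !![-a, b; b, a] * !![-a, b; b, a] = (a ^ 2 + b ^ 2) • (1 : Matrix (Fin 2) (Fin 2) α) := by
  ext i j
  fin_cases i <;> fin_cases j <;>
    simp only [Matrix.mul_apply, Fin.sum_univ_two, Matrix.smul_apply, Matrix.of_apply,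
      Matrix.cons_val', Matrix.cons_val_zero, Matrix.cons_val_one, Matrix.cons_val_fin_one,
      Matrix.one_apply_eq, Matrix.one_apply_ne, ne_eq, zero_ne_one, one_ne_zero, not_false_eq_true,
      Fin.zero_eta, Fin.mk_one, Fin.isValue, smul_eq_mul] <;> ring

lemma Matrix.fin_two_neg_diag_mulVec_one (a b : α) :
    (!![-a, b; b, a] : Matrix (Fin 2) (Fin 2) α).mulVec ![1, 1] = ![b - a, b + a] := by
  ext i
  fin_cases i <;>
    simp only [Matrix.mulVec, dotProduct, Fin.sum_univ_two, Matrix.of_apply, Matrix.cons_val',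
      Matrix.cons_val_zero, Matrix.cons_val_one, Matrix.cons_val_fin_one, Fin.zero_eta,
      Fin.mk_one, Fin.isValue, mul_one]
  ring

end FinTwo

theorem matrix_exp_feynman_kac_instantaneous_tumble_general
    (w ζ t : ℝ) (hw : 0 < w) :
    (NormedSpace.exp
        (t • ((Matrix.of ![![-w, w], ![w, -w]] : Matrix (Fin 2) (Fin 2) ℝ) +
          ζ • (Matrix.of ![![-1, 0], ![0, 1]] : Matrix (Fin 2) (Fin 2) ℝ)))).mulVec ![1, 1] =
      ![Real.exp (-(t * w)) *
          ((w - ζ) * Real.sinh (t * Real.sqrt (ζ ^ 2 + w ^ 2)) / Real.sqrt (ζ ^ 2 + w ^ 2) +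
            Real.cosh (t * Real.sqrt (ζ ^ 2 + w ^ 2))),
        Real.exp (-(t * w)) *
          ((w + ζ) * Real.sinh (t * Real.sqrt (ζ ^ 2 + w ^ 2)) / Real.sqrt (ζ ^ 2 + w ^ 2) +
            Real.cosh (t * Real.sqrt (ζ ^ 2 + w ^ 2)))] := by
  set r := Real.sqrt (ζ ^ 2 + w ^ 2)
  have hr : r ≠ 0 := (Real.sqrt_pos.mpr (by positivity)).ne'
  have hB : !![-ζ, w; w, ζ] * !![-ζ, w; w, ζ] = r ^ 2 • (1 : Matrix (Fin 2) (Fin 2) ℝ) := by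
    rw [Real.sq_sqrt (by positivity)]
    exact Matrix.fin_two_neg_diag_mul_self ζ w
  have hcomm :
      Commute ((-(t * w)) • (1 : Matrix (Fin 2) (Fin 2) ℝ)) (t • !![-ζ, w; w, ζ]) :=
    ((Commute.one_left _).smul_left _).smul_right _
  rw [Matrix.fin_two_generator_add_smul_eq, smul_add, smul_smul, mul_neg,
    Matrix.exp_add_of_commute _ _ hcomm, Matrix.exp_smul_one, exp_smul_of_mul_self_eq hB hr,
    smul_one_mul, Matrix.smul_mulVec, Matrix.add_mulVec, Matrix.smul_mulVec, Matrix.smul_mulVec,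
    Matrix.one_mulVec, Matrix.fin_two_neg_diag_mulVec_one, Matrix.smul_vec2, Matrix.smul_vec2,
    Matrix.vec2_add, Matrix.smul_vec2]
  simp only [smul_eq_mul]
  exact Matrix.vec2_eq (by ring) (by ring)

/-- **Feynman–Kac matrix identity for the instantaneous-tumble velocity process.**
For `ω > 0`, `ζ ∈ ℝ` and `t ≥ 0`, with `𝔔 = [[-ω, ω], [ω, -ω]]` and `V = [[-1, 0], [0, 1]]`,
the matrix exponential `exp (t (𝔔 + ζ V))` applied to the vector `(1, 1)ᵀ` equals the vector
with components
`e^{-tω} ((ω ∓ ζ) sinh (t √(ζ² + ω²)) / √(ζ² + ω²) + cosh (t √(ζ² + ω²)))`. -/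
theorem matrix_exp_feynman_kac_instantaneous_tumble
    (w ζ t : ℝ) (hw : 0 < w) (ht : 0 ≤ t) :
    (NormedSpace.exp
        (t • ((Matrix.of ![![-w, w], ![w, -w]] : Matrix (Fin 2) (Fin 2) ℝ) +
          ζ • (Matrix.of ![![-1, 0], ![0, 1]] : Matrix (Fin 2) (Fin 2) ℝ)))).mulVec ![1, 1] =
      ![Real.exp (-(t * w)) *
          ((w - ζ) * Real.sinh (t * Real.sqrt (ζ ^ 2 + w ^ 2)) / Real.sqrt (ζ ^ 2 + w ^ 2) +
            Real.cosh (t * Real.sqrt (ζ ^ 2 + w ^ 2))),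
        Real.exp (-(t * w)) *
          ((w + ζ) * Real.sinh (t * Real.sqrt (ζ ^ 2 + w ^ 2)) / Real.sqrt (ζ ^ 2 + w ^ 2) +
            Real.cosh (t * Real.sqrt (ζ ^ 2 + w ^ 2)))] :=
  matrix_exp_feynman_kac_instantaneous_tumble_general w ζ t hw
end
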